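/- arXiv:1912.02103 — 2 statements merged into one kernel-verified Lean document; each statement's English description precedes it below -/
import Mathlib

section
/- Let X be a metric space. If coasdim(X) ≤ γ for some ordinal number γ, then trasdim(X) ≤ γ. -/
open Metric Set Filter ENNReal

noncomputable section

namespace AsympPaper

/-- The distance between two subsets of a (pseudo)metric space,
`d(A,B) = inf {dist a b : a ∈ A, b ∈ B}`, valued in `ℝ≥0∞` (it is `∞` if `A` or `B` is empty). -/
def setEDist {X : Type*} [PseudoMetricSpace X] (A B : Set X) : ℝ≥0∞ :=
  ⨅ a ∈ A, ⨅ b ∈ B, edist a b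

/-- A family `𝒰` of subsets of a metric space is `r`-disjoint if `d(U,V) > r`
for all distinct `U, V ∈ 𝒰`. -/
def RDisjoint {X : Type*} [PseudoMetricSpace X] (r : ℝ) (𝒰 : Set (Set X)) : Prop :=
  ∀ U ∈ 𝒰, ∀ V ∈ 𝒰, U ≠ V → ENNReal.ofReal r < setEDist U V

/-- A family `𝒰` of subsets of a metric space is uniformly bounded if
`sup {diam U : U ∈ 𝒰} < ∞`. -/
def UniformlyBdd {X : Type*} [PseudoMetricSpace X] (𝒰 : Set (Set X)) : Prop :=
  ∃ R : ℝ, ∀ U ∈ 𝒰, ∀ x ∈ U, ∀ y ∈ U, dist x y ≤ R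

/-- `Msub M σ` is the set `M^σ = {τ ∈ Fin ℕ : τ ∪ σ ∈ M and τ ∩ σ = ∅}`,
where `Fin ℕ` is the collection of finite nonempty subsets of `ℕ`. -/
def Msub (M : Set (Finset ℕ)) (σ : Finset ℕ) : Set (Finset ℕ) :=
  {τ | τ.Nonempty ∧ τ ∪ σ ∈ M ∧ τ ∩ σ = ∅}

/-- `OrdLE M α` is the relation `Ord M ≤ α`:  `Ord ∅ = 0` (so `Ord ∅ ≤ α` always), and for
`M ≠ ∅`, `Ord M ≤ α` iff `Ord M^a < α` for every `a ∈ ℕ`. -/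
def OrdLE (M : Set (Finset ℕ)) (α : Ordinal.{0}) : Prop :=
  M = ∅ ∨ ∀ a : ℕ, ∃ β : {β : Ordinal.{0} // β < α}, OrdLE (Msub M {a}) β.1
termination_by α
decreasing_by exact β.2

/-- `Ord M < α`. -/
def OrdLT (M : Set (Finset ℕ)) (α : Ordinal.{0}) : Prop := ∃ β < α, OrdLE M β

/-- `Ord M = α`. -/
def OrdEq (M : Set (Finset ℕ)) (α : Ordinal.{0}) : Prop := OrdLE M α ∧ ¬ OrdLT M α

/-- `A(X)`: the set of finite nonempty `σ ⊆ ℕ` such that there are *no* uniformly bounded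
families `𝒰 i` for `i ∈ σ`, each `𝒰 i` being `i`-disjoint, with `⋃_{i ∈ σ} 𝒰 i` covering `X`. -/
def AX (X : Type*) [PseudoMetricSpace X] : Set (Finset ℕ) :=
  {σ | σ.Nonempty ∧ ¬ ∃ 𝒰 : ℕ → Set (Set X),
      (∀ i ∈ σ, UniformlyBdd (𝒰 i) ∧ RDisjoint (i : ℝ) (𝒰 i)) ∧
      ∀ x : X, ∃ i ∈ σ, ∃ U ∈ 𝒰 i, x ∈ U}

/-- `trasdim(X) ≤ γ`, i.e. `Ord A(X) ≤ γ`. -/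
def TrasdimLE (X : Type*) [PseudoMetricSpace X] (γ : Ordinal.{0}) : Prop := OrdLE (AX X) γ

/-- `trasdim(X) = γ`, i.e. `Ord A(X) = γ`. -/
def TrasdimEq (X : Type*) [PseudoMetricSpace X] (γ : Ordinal.{0}) : Prop := OrdEq (AX X) γ

/-- Auxiliary for `coasdim`: `CoasdimLEAux A lam n` says `coasdim(A) ≤ lam + n` where `lam` is
a limit ordinal or `0` and `n ∈ ℕ`: for every `r > 0` there are `r`-disjoint uniformly bounded
families `𝒰 0, …, 𝒰 n` of subsets of `A` such that `coasdim(A \ ⋃ i, ⋃₀ 𝒰 i) < lam`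
(where `coasdim = -1` exactly for `∅`). -/
def CoasdimLEAux {X : Type*} [PseudoMetricSpace X] (A : Set X) (lam : Ordinal.{0}) (n : ℕ) :
    Prop :=
  ∀ r : ℝ, 0 < r → ∃ 𝒰 : Fin (n + 1) → Set (Set X),
    (∀ i, (∀ U ∈ 𝒰 i, U ⊆ A) ∧ UniformlyBdd (𝒰 i) ∧ RDisjoint r (𝒰 i)) ∧
    ((A \ ⋃ i, ⋃₀ 𝒰 i) = ∅ ∨
      ∃ q : {q : Ordinal.{0} × ℕ // q.1 + q.2 < lam ∧ (q.1 = 0 ∨ Order.IsSuccLimit q.1)},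
        CoasdimLEAux (A \ ⋃ i, ⋃₀ 𝒰 i) q.1.1 q.1.2)
termination_by lam
decreasing_by exact lt_of_le_of_lt (le_self_add) q.2.1

/-- `coasdim(A) ≤ γ` for a subset `A` of an ambient metric space (with the induced metric). -/
def CoasdimLE {X : Type*} [PseudoMetricSpace X] (A : Set X) (γ : Ordinal.{0}) : Prop :=
  ∃ lam : Ordinal.{0}, ∃ n : ℕ, (lam = 0 ∨ Order.IsSuccLimit lam) ∧ γ = lam + n ∧ CoasdimLEAux A lam n

/-- `coasdim(A) = γ`. -/
def CoasdimEq {X : Type*} [PseudoMetricSpace X] (A : Set X) (γ : Ordinal.{0}) : Prop :=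
  CoasdimLE A γ ∧ ∀ β < γ, ¬ CoasdimLE A β

/-- `1 + 2 + ⋯ + (i-1) = i(i-1)/2`, as a real number. -/
def triHalf (i : ℕ) : ℝ := ((i * (i - 1)) / 2 : ℕ)

/-- The asymptotic union `as⊔_{i=1}^∞ Z_i` of a sequence of subspaces `Z_i = S i` of an ambient
metric space `Z` (indices with `S i = ∅` are vacuous; in particular take `S 0 = ∅` to start
the union at `i = 1`). A point is a pair `(i, x)` with `x ∈ S i`. -/
structure AsUnion {Z : Type*} (S : ℕ → Set Z) where
  idx : ℕ
  pt : S idx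

/-- The metric of the asymptotic union: `d((l,x),(k,y)) = d_Z(x,y) + c` where, for `l ≤ k`,
`c = 0` if `l = k` and `c = l + (l+1) + ⋯ + (k-1)` if `l < k`. -/
instance AsUnion.instPseudoMetricSpace {Z : Type*} [PseudoMetricSpace Z] (S : ℕ → Set Z) :
    PseudoMetricSpace (AsUnion S) where
  dist p q := dist (p.pt : Z) (q.pt : Z) + |triHalf p.idx - triHalf q.idx|
  dist_self p := by simp
  dist_comm p q := by
    show dist (p.pt : Z) (q.pt : Z) + |triHalf p.idx - triHalf q.idx|
      = dist (q.pt : Z) (p.pt : Z) + |triHalf q.idx - triHalf p.idx|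
    rw [dist_comm, abs_sub_comm]
  dist_triangle p q r := by
    show dist (p.pt : Z) (r.pt : Z) + |triHalf p.idx - triHalf r.idx|
      ≤ (dist (p.pt : Z) (q.pt : Z) + |triHalf p.idx - triHalf q.idx|)
        + (dist (q.pt : Z) (r.pt : Z) + |triHalf q.idx - triHalf r.idx|)
    have h1 := dist_triangle (p.pt : Z) (q.pt : Z) (r.pt : Z)
    have h2 := abs_sub_le (triHalf p.idx) (triHalf q.idx) (triHalf r.idx)
    linarith

/-- The ambient space `⊕ ℝ` of sequences, realized inside the bounded
functions `ℕ →ᵇ ℝ` with the sup-metric. -/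
abbrev Amb : Type := BoundedContinuousFunction ℕ ℝ

/-- `t ∈ 2^n ℤ`. -/
def IsMultiple (n : ℕ) (t : ℝ) : Prop := ∃ m : ℤ, t = (m : ℝ) * 2 ^ n

/-- `X_{ω+k}^{(i,n)} = {x ∈ ℝ^i : #{j : x_j ∉ 2^n ℤ} ≤ k}`, realized as the subset of `⊕ ℝ`
of sequences supported on the first `i` coordinates. -/
def XSet (k i n : ℕ) : Set Amb :=
  {f | (∀ j, i ≤ j → f j = 0) ∧ ({j | j < i ∧ ¬ IsMultiple n (f j)}).ncard ≤ k}

/-- `X_{ω+k} = as⊔_{i=1}^∞ X_{ω+k}^{(i)}` where `X_{ω+k}^{(i)} = X_{ω+k}^{(i,i)}`. -/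
def XOmegaPlus (k : ℕ) : Type := AsUnion (fun i => if i = 0 then (∅ : Set Amb) else XSet k i i)

instance (k : ℕ) : PseudoMetricSpace (XOmegaPlus k) :=
  AsUnion.instPseudoMetricSpace _

/-- `as⊔_{i=n}^∞ X_{ω+k}^{(i,n)}`. -/
def XTail (k n : ℕ) : Type := AsUnion (fun i => if i < n then (∅ : Set Amb) else XSet k i n)

instance (k n : ℕ) : PseudoMetricSpace (XTail k n) :=
  AsUnion.instPseudoMetricSpace _

/-- `Y_{ω+k}^{(i)} = {x ∈ (2^k ℤ)^i : #{j : x_j ∉ 2^i ℤ} ≤ k}` inside `⊕ ℝ`. -/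
def YSet (k i : ℕ) : Set Amb :=
  {f | (∀ j, i ≤ j → f j = 0) ∧ (∀ j, j < i → IsMultiple k (f j)) ∧
    ({j | j < i ∧ ¬ IsMultiple i (f j)}).ncard ≤ k}

/-- `Y_{ω+k} = as⊔_{i=1}^∞ Y_{ω+k}^{(i)}`. -/
def YOmegaPlus (k : ℕ) : Type := AsUnion (fun i => if i = 0 then (∅ : Set Amb) else YSet k i)

instance (k : ℕ) : PseudoMetricSpace (YOmegaPlus k) :=
  AsUnion.instPseudoMetricSpace _

/-- `ℝ^i` inside `⊕ ℝ`. -/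
def RSet (i : ℕ) : Set Amb := {f | ∀ j, i ≤ j → f j = 0}

/-- The ambient space `as⊔_{i=1}^∞ ℝ^i`. -/
def AsR : Type := AsUnion (fun i => if i = 0 then (∅ : Set Amb) else RSet i)

instance : PseudoMetricSpace AsR := AsUnion.instPseudoMetricSpace _

/-- `Y_{ω+k}` viewed as a subspace of `as⊔_{i=1}^∞ ℝ^i`. -/
def YSub (k : ℕ) : Set AsR := {p | (p.pt : Amb) ∈ YSet k p.idx}

/-- `Y_{2ω} = as⊔_{k=1}^∞ Y_{ω+k}`, the `Y_{ω+k}` being subspaces of `as⊔_{i=1}^∞ ℝ^i`. -/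
def Y2Omega : Type := AsUnion (fun k => if k = 0 then (∅ : Set AsR) else YSub k)

instance : PseudoMetricSpace Y2Omega := AsUnion.instPseudoMetricSpace _

/-- A family covers the space. -/
def Covers {X : Type*} (𝒰 : Set (Set X)) : Prop := ∀ x : X, ∃ U ∈ 𝒰, x ∈ U

/-- The Lebesgue number `L(𝒰) = inf_{x ∈ X} sup {r > 0 : ∃ U ∈ 𝒰, B(x,r) ⊆ U}`,
valued in `ℝ≥0∞`. -/
def lebesgueNum {X : Type*} [PseudoMetricSpace X] (𝒰 : Set (Set X)) : ℝ≥0∞ :=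
  ⨅ x : X, sSup {e : ℝ≥0∞ | ∃ r : ℝ, 0 < r ∧ e = ENNReal.ofReal r ∧ ∃ U ∈ 𝒰, Metric.ball x r ⊆ U}

/-- The multiplicity `m(𝒰)`: the maximal number of members of `𝒰` with nonempty
intersection, valued in `ℕ∞`. -/
def covMult {X : Type*} (𝒰 : Set (Set X)) : ℕ∞ :=
  sSup {m : ℕ∞ | ∃ t : Finset (Set X), ↑t ⊆ 𝒰 ∧ (⋂₀ (t : Set (Set X))).Nonempty ∧ m = t.card}

/-- The asymptotic dimension function
`ad_X(λ) = min {m(𝒰) : 𝒰 a uniformly bounded cover of X with L(𝒰) ≥ λ} - 1`. -/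
def adim (X : Type*) [PseudoMetricSpace X] (lam : ℝ) : ℕ∞ :=
  sInf {m : ℕ∞ | ∃ 𝒰 : Set (Set X), UniformlyBdd 𝒰 ∧ Covers 𝒰 ∧
    ENNReal.ofReal lam ≤ lebesgueNum 𝒰 ∧ m = covMult 𝒰} - 1

/-- `(2^k ℤ)^n` as a subset of `ℝ^n` (the latter carrying the sup-metric). -/
def grid (k n : ℕ) : Set (Fin n → ℝ) := {x | ∀ j, IsMultiple k (x j)}

/-- `g̃(r) = max {k ∈ ℕ : ad_{(2^k ℤ)^{g(r)}}(r) = g(r)}`. -/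
def gtilde (g : ℝ → ℕ) (r : ℝ) : ℕ :=
  sSup {k : ℕ | adim (grid k (g r)) r = (g r : ℕ∞)}

/-- `(2^k ℤ)^n` realized inside `⊕ ℝ`: sequences supported on the first `n` coordinates,
with those coordinates in `2^k ℤ`. -/
def gridSet (k n : ℕ) : Set Amb :=
  {f | (∀ j, n ≤ j → f j = 0) ∧ ∀ j, j < n → IsMultiple k (f j)}

/-- `X_ω(g) = as⊔_{i=1}^∞ (2^{g̃(i)} ℤ)^{g(i)}`. -/
def XOmegaG (g : ℝ → ℕ) : Type :=
  AsUnion (fun i => if i = 0 then (∅ : Set Amb) else gridSet (gtilde g (i : ℝ)) (g (i : ℝ)))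

instance (g : ℝ → ℕ) : PseudoMetricSpace (XOmegaG g) := AsUnion.instPseudoMetricSpace _

/-- `f : X → Y` is a coarse equivalence: a coarse embedding with coarsely dense image. -/
def IsCoarseEquiv {X Y : Type*} [PseudoMetricSpace X] [PseudoMetricSpace Y] (f : X → Y) : Prop :=
  (∃ p₁ p₂ : ℝ → ℝ, Monotone p₁ ∧ Monotone p₂ ∧
      Tendsto p₁ atTop atTop ∧ Tendsto p₂ atTop atTop ∧
      ∀ x₁ x₂ : X, p₁ (dist x₁ x₂) ≤ dist (f x₁) (f x₂) ∧ dist (f x₁) (f x₂) ≤ p₂ (dist x₁ x₂)) ∧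
  ∃ R : ℝ, 0 < R ∧ ∀ y : Y, ∃ x : X, dist y (f x) < R

/-- A family `𝒳` (of subsets of an ambient space) is `r`-decomposable over a family `𝒴`:
each `A ∈ 𝒳` splits as `A = A₀ ∪ A₁`, each `A_i` being an `r`-disjoint union of members
of a subfamily of `𝒴`. -/
def RDecomp {X : Type*} [PseudoMetricSpace X] (r : ℝ) (F G : Set (Set X)) : Prop :=
  ∀ A ∈ F, ∃ A₀ A₁ : Set X, A = A₀ ∪ A₁ ∧
    (∃ P ⊆ G, A₀ = ⋃₀ P ∧ RDisjoint r P) ∧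
    (∃ P ⊆ G, A₁ = ⋃₀ P ∧ RDisjoint r P)

/-- `F ∈ D_α`, finite decomposition complexity: `D_0` consists of the bounded
families, and for `α > 0`, `F ∈ D_α` iff for every `r > 0` there are `β < α` and
`G ∈ D_β` such that `F` is `r`-decomposable over `G`. -/
def InD {X : Type*} [PseudoMetricSpace X] (F : Set (Set X)) (α : Ordinal.{0}) : Prop :=
  if α = 0 then ∃ R : ℝ, ∀ A ∈ F, ∀ x ∈ A, ∀ y ∈ A, dist x y ≤ R
  else ∀ r : ℝ, 0 < r → ∃ β : {β : Ordinal.{0} // β < α},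
    ∃ G : Set (Set X), InD G β.1 ∧ RDecomp r F G
termination_by α
decreasing_by exact β.2

end AsympPaper


/-!
Induct on `λ`, proving `Ord A(Z) ≤ λ + n` for every subset `Z` with `coasdim(Z) ≤ λ + n`. Given `σ`
with `|σ| = n + 1`, apply the definition of `coasdim` with `r > max σ`: the `n + 1` families it
produces are `i`-disjoint for every `i ∈ σ`, so relabelled by `σ` they cover `Z` outside a remainder
`Y` with `coasdim(Y) < λ`. A cover of `Y` indexed by some `τ` disjoint from `σ` then extends to a
cover of `Z` indexed by `τ ∪ σ`, so `A(Z)^σ ⊆ A(Y)` and `Ord A(Z)^σ < λ` by induction. A purely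
combinatorial lemma turns this bound for all `σ` of size `n + 1` into `Ord A(Z) ≤ λ + n`.
-/

namespace AsympPaper

section Ord

lemma ordLE_empty (α : Ordinal.{0}) : OrdLE ∅ α := by
  rw [OrdLE]
  exact Or.inl rfl

lemma msub_mono {M N : Set (Finset ℕ)} (h : M ⊆ N) (σ : Finset ℕ) : Msub M σ ⊆ Msub N σ :=
  fun _ hτ => ⟨hτ.1, h hτ.2.1, hτ.2.2⟩

lemma ordLE_mono {M N : Set (Finset ℕ)} (hMN : M ⊆ N) {α : Ordinal.{0}} (hN : OrdLE N α) :
    OrdLE M α := by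
  induction α using WellFoundedLT.induction generalizing M N with
  | _ α IH =>
    rw [OrdLE] at hN ⊢
    refine hN.imp (fun h => subset_empty_iff.mp (hMN.trans h.subset)) fun h a => ?_
    obtain ⟨β, hβ⟩ := h a
    exact ⟨β, IH β β.2 (msub_mono hMN _) hβ⟩

lemma msub_msub_of_notMem {M : Set (Finset ℕ)} {a : ℕ} {σ : Finset ℕ} (ha : a ∉ σ) :
    Msub (Msub M {a}) σ = Msub M (insert a σ) := by
  ext τ
  have hunion : τ ∪ σ ∪ {a} = τ ∪ insert a σ := by
    rw [Finset.union_assoc, Finset.union_comm σ, ← Finset.insert_eq]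
  simp only [Msub, Set.mem_ofPred_eq, hunion, ← Finset.disjoint_iff_inter_eq_empty,
    Finset.disjoint_singleton_right, Finset.disjoint_insert_right, Finset.mem_union, not_or]
  constructor
  · rintro ⟨hτ, ⟨-, hmem, haτ, -⟩, hτσ⟩
    exact ⟨hτ, hmem, haτ, hτσ⟩
  · rintro ⟨hτ, hmem, haτ, hτσ⟩
    exact ⟨hτ, ⟨hτ.mono Finset.subset_union_left, hmem, haτ, ha⟩, hτσ⟩

lemma ordLE_of_forall_singleton {M : Set (Finset ℕ)} (hM : ∀ τ ∈ M, τ.Nonempty)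
    {α : Ordinal.{0}} (h : ∀ a : ℕ, (∀ τ ∈ M, a ∉ τ) ∨ OrdLT (Msub M {a}) α) : OrdLE M α := by
  rw [OrdLE]
  rcases eq_or_ne α 0 with rfl | hα
  · refine Or.inl (eq_empty_of_forall_notMem fun τ hτ => ?_)
    obtain ⟨a, ha⟩ := hM τ hτ
    rcases h a with h | ⟨β, hβ, -⟩
    · exact h τ hτ ha
    · exact (not_lt_zero hβ).elim
  · refine Or.inr fun a => ?_
    rcases h a with h | ⟨β, hβ, hO⟩
    · refine ⟨⟨0, pos_iff_ne_zero.mpr hα⟩, ordLE_mono (fun τ hτ => ?_) (ordLE_empty 0)⟩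
      exact h _ hτ.2.1 (Finset.mem_union_right _ (Finset.mem_singleton_self a))
    · exact ⟨⟨β, hβ⟩, hO⟩

lemma ordLE_add_of_forall_card_eq {α : Ordinal.{0}} {n : ℕ} {M : Set (Finset ℕ)}
    (hM : ∀ τ ∈ M, τ.Nonempty)
    (h : ∀ σ : Finset ℕ, σ.card = n + 1 → (∀ τ ∈ M, ¬ σ ⊆ τ) ∨ OrdLT (Msub M σ) α) :
    OrdLE M (α + n) := by
  induction n generalizing M with
  | zero =>
    refine (add_zero α).symm ▸ ordLE_of_forall_singleton hM fun a => ?_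
    simpa only [Finset.singleton_subset_iff] using h {a} rfl
  | succ n IH =>
    rw [OrdLE]
    refine Or.inr fun a => ⟨⟨α + n, by simp⟩, IH (fun τ hτ => hτ.1) fun σ hσ => ?_⟩
    by_cases ha : a ∈ σ
    · exact Or.inl fun τ hτ hστ =>
        Finset.disjoint_singleton_right.mp (Finset.disjoint_iff_inter_eq_empty.mpr hτ.2.2) (hστ ha)
    · rw [msub_msub_of_notMem ha]
      refine (h (insert a σ) (by rw [Finset.card_insert_of_notMem ha, hσ])).imp_left
        fun h τ hτ hστ => h _ hτ.2.1 ?_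
      rw [Finset.insert_eq, Finset.union_comm]
      exact Finset.union_subset_union hστ subset_rfl

end Ord

section Cover

variable {X : Type*} [PseudoMetricSpace X]

def AdmitsCover (A : Set X) (σ : Finset ℕ) : Prop :=
  ∃ 𝒰 : ℕ → Set (Set X), (∀ i ∈ σ, UniformlyBdd (𝒰 i) ∧ RDisjoint (i : ℝ) (𝒰 i)) ∧
    ∀ x ∈ A, ∃ i ∈ σ, ∃ U ∈ 𝒰 i, x ∈ U

/-- `A(Z)` for a subset `Z` of `X`; the covering families may consist of arbitrary subsets of `X`. -/
def nonCoverable (Z : Set X) : Set (Finset ℕ) := {σ | σ.Nonempty ∧ ¬ AdmitsCover Z σ}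

lemma AX_eq_nonCoverable_univ : AX X = nonCoverable (univ : Set X) := by
  simp [AX, nonCoverable, AdmitsCover]

lemma rDisjoint_mono {r s : ℝ} (h : r ≤ s) {𝒰 : Set (Set X)} (hs : RDisjoint s 𝒰) :
    RDisjoint r 𝒰 := fun U hU V hV hne =>
  (ENNReal.ofReal_le_ofReal h).trans_lt (hs U hU V hV hne)

lemma admitsCover_empty (σ : Finset ℕ) : AdmitsCover (∅ : Set X) σ :=
  ⟨fun _ => ∅, fun _ _ => ⟨⟨0, by simp⟩, by simp [RDisjoint]⟩, by simp⟩

lemma AdmitsCover.union {A B : Set X} {σ τ : Finset ℕ} (hA : AdmitsCover A σ)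
    (hB : AdmitsCover B τ) (hστ : Disjoint σ τ) : AdmitsCover (A ∪ B) (σ ∪ τ) := by
  obtain ⟨𝒰, h𝒰, hA⟩ := hA
  obtain ⟨𝒱, h𝒱, hB⟩ := hB
  refine ⟨fun i => if i ∈ σ then 𝒰 i else 𝒱 i, fun i hi => ?_, ?_⟩
  · by_cases hiσ : i ∈ σ
    · simpa only [if_pos hiσ] using h𝒰 i hiσ
    · simpa only [if_neg hiσ] using h𝒱 i ((Finset.mem_union.mp hi).resolve_left hiσ)
  · rintro x (hx | hx)
    · obtain ⟨i, hi, U, hU, hxU⟩ := hA x hx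
      exact ⟨i, Finset.mem_union_left _ hi, U, by simpa only [if_pos hi] using hU, hxU⟩
    · obtain ⟨i, hi, U, hU, hxU⟩ := hB x hx
      have hiσ : i ∉ σ := Finset.disjoint_right.mp hστ hi
      exact ⟨i, Finset.mem_union_right _ hi, U, by simpa only [if_neg hiσ] using hU, hxU⟩

lemma AdmitsCover.mono {A B : Set X} {σ : Finset ℕ} (h : AdmitsCover A σ) (hBA : B ⊆ A) :
    AdmitsCover B σ :=
  let ⟨𝒰, h𝒰, hA⟩ := h
  ⟨𝒰, h𝒰, fun x hx => hA x (hBA hx)⟩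

lemma AdmitsCover.of_diff {A C : Set X} {σ τ : Finset ℕ} (hC : AdmitsCover C σ)
    (hAC : AdmitsCover (A \ C) τ) (hτσ : Disjoint τ σ) : AdmitsCover A (τ ∪ σ) :=
  (hAC.union hC hτσ).mono (subset_sdiff_union A C)

lemma admitsCover_of_equiv {ι : Type*} {σ : Finset ℕ} (e : ι ≃ σ) {r : ℝ}
    (hr : ∀ i ∈ σ, (i : ℝ) ≤ r) {𝒰 : ι → Set (Set X)}
    (h𝒰 : ∀ j, UniformlyBdd (𝒰 j) ∧ RDisjoint r (𝒰 j)) : AdmitsCover (⋃ j, ⋃₀ 𝒰 j) σ := by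
  refine ⟨fun i => if hi : i ∈ σ then 𝒰 (e.symm ⟨i, hi⟩) else ∅, fun i hi => ?_, ?_⟩
  · simp only [dif_pos hi]
    exact ⟨(h𝒰 _).1, rDisjoint_mono (hr i hi) (h𝒰 _).2⟩
  · simp only [mem_iUnion, mem_sUnion]
    rintro x ⟨j, U, hU, hxU⟩
    exact ⟨e j, (e j).2, U, by simpa using hU, hxU⟩

lemma msub_nonCoverable_subset {A C : Set X} {σ : Finset ℕ} (hC : AdmitsCover C σ) :
    Msub (nonCoverable A) σ ⊆ nonCoverable (A \ C) := fun _τ ⟨hτ, ⟨_, hnot⟩, hτσ⟩ =>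
  ⟨hτ, fun h => hnot (hC.of_diff h (Finset.disjoint_iff_inter_eq_empty.mpr hτσ))⟩

theorem ordLE_nonCoverable_of_coasdimLEAux (lam : Ordinal.{0}) (n : ℕ) (Z : Set X)
    (hZ : CoasdimLEAux Z lam n) : OrdLE (nonCoverable Z) (lam + n) := by
  induction lam using WellFoundedLT.induction generalizing n Z with
  | _ lam IH =>
    refine ordLE_add_of_forall_card_eq (fun σ hσ => hσ.1) fun σ hσ => ?_
    rw [CoasdimLEAux] at hZ
    obtain ⟨𝒰, h𝒰, hrest⟩ := hZ (σ.sup id + 1) (by positivity)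
    have hC : AdmitsCover (⋃ j, ⋃₀ 𝒰 j) σ :=
      admitsCover_of_equiv (σ.equivFinOfCardEq hσ).symm
        (fun i hi => by exact_mod_cast (Finset.le_sup (f := id) hi).trans (Nat.le_succ _))
        fun j => (h𝒰 j).2
    rcases hrest with hY | ⟨⟨⟨μ, m⟩, hlt, _⟩, hY⟩
    · refine Or.inl fun τ hτ hστ => hτ.2 ?_
      have := hC.of_diff (hY ▸ admitsCover_empty (τ \ σ)) Finset.sdiff_disjoint
      rwa [Finset.sdiff_union_of_subset hστ] at this
    · exact Or.inr ⟨μ + m, hlt, ordLE_mono (msub_nonCoverable_subset hC)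
        (IH μ (le_self_add.trans_lt hlt) m _ hY)⟩

end Cover

end AsympPaper

open AsympPaper

/-- Let `X` be a metric space. If `coasdim(X) ≤ γ` for some ordinal `γ`,
then `trasdim(X) ≤ γ`. -/
theorem statement_2 {X : Type*} [MetricSpace X] (γ : Ordinal.{0})
    (h : CoasdimLE (Set.univ : Set X) γ) : TrasdimLE X γ := by
  obtain ⟨lam, n, -, rfl, hX⟩ := h
  rw [TrasdimLE, AX_eq_nonCoverable_univ]
  exact ordLE_nonCoverable_of_coasdimLEAux lam n univ hX
end
end

section
/- For every integer r > 4, the asymptotic dimension function of Y_{2ω} satisfies ad_{Y_{2ω}}(r/2) ≤ r(r+3)/2 + 3^{r−1}·r + 1. -/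
open Metric Set Filter ENNReal

noncomputable section

open AsympPaper

/-!
Cover `Y_{2ω}` by the sets of points `(k, i, x)` with prescribed `k` and `i` after collapsing all
indices below `r` to `0`, and with each coordinate `x_j` in a prescribed tile
`[nT - (T + r)/2, nT + (T + r)/2]`, `T = 2^r`. Collapsed indices are within bounded distance of each
other, distinct indices `≥ r` are at least `r/2` apart, and consecutive tiles overlap in length `r`;
so the cover is uniformly bounded with Lebesgue number `r/2`. As `T > r`, a real lies in at most two
tiles, and in only one if it is a multiple of `T`. At most `r` coordinates of a point of
`Y_{ω+k}^{(i)}` are not multiples of `2^r`: there are only `i` of them when `i ≤ r`; otherwise all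
are multiples of `2^k` when `k ≥ r`, and at most `k` fail to be multiples of `2^i` when `k < r`.
Hence the multiplicity is at most `2^r ≤ 3^(r-1) r`.
-/

namespace AsympPaper

theorem covMult_le_of_encard_le {Y : Type*} {𝒱 : Set (Set Y)} {n : ℕ∞}
    (h : ∀ y, {U ∈ 𝒱 | y ∈ U}.encard ≤ n) : covMult 𝒱 ≤ n := by
  refine sSup_le ?_
  rintro m ⟨t, ht, ⟨y, hy⟩, rfl⟩
  rw [← encard_coe_eq_coe_finsetCard]
  exact (encard_le_encard fun U hU => mem_sep (ht hU) (hy U hU)).trans (h y)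

section Cover

variable {X : Type*} [PseudoMetricSpace X] {𝒰 : Set (Set X)}

theorem covers_of_forall_ball_subset {lam : ℝ} (hlam : 0 < lam)
    (h : ∀ x : X, ∃ U ∈ 𝒰, ball x lam ⊆ U) : Covers 𝒰 := by
  intro x
  obtain ⟨U, hU, hball⟩ := h x
  exact ⟨U, hU, hball (mem_ball_self hlam)⟩

theorem ofReal_le_lebesgueNum {lam : ℝ} (hlam : 0 < lam)
    (h : ∀ x : X, ∃ U ∈ 𝒰, ball x lam ⊆ U) : ENNReal.ofReal lam ≤ lebesgueNum 𝒰 :=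
  le_iInf fun x => le_sSup <| by exact ⟨lam, hlam, rfl, h x⟩

theorem adim_le_of_cover {lam : ℝ} {m : ℕ∞} (hbdd : UniformlyBdd 𝒰) (hcov : Covers 𝒰)
    (hleb : ENNReal.ofReal lam ≤ lebesgueNum 𝒰) (hmult : covMult 𝒰 ≤ m) :
    adim X lam ≤ m - 1 :=
  tsub_le_tsub_right (sInf_le_of_le (by exact ⟨𝒰, hbdd, hcov, hleb, rfl⟩) hmult) 1

end Cover

theorem encard_univ_pi_le_two_pow {ι β : Type*} (B : Finset ι) (a b : ι → β)
    (S : ι → Set β) (hS : ∀ j, S j ⊆ {a j, b j}) (hB : ∀ j ∉ B, S j ⊆ {a j}) :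
    (univ.pi S).encard ≤ 2 ^ B.card := by
  classical
  let φ : Finset ι → ι → β := fun s j => if j ∈ s then b j else a j
  have hsub : univ.pi S ⊆ φ '' ↑B.powerset := by
    intro w hw
    refine ⟨B.filter fun j => w j ≠ a j, Finset.mem_powerset.2 (Finset.filter_subset _ _),
      funext fun j => ?_⟩
    have hj := hw j (mem_univ j)
    by_cases hja : w j = a j
    · simp [φ, hja]
    · have hjB : j ∈ B := by_contra fun hjB => hja (hB j hjB hj)
      have hjb : w j = b j := (hS j hj).resolve_left hja
      simp [φ, hjB, hjb, eq_comm]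
  calc (univ.pi S).encard ≤ (φ '' ↑B.powerset).encard := encard_le_encard hsub
    _ ≤ (↑B.powerset : Set (Finset ι)).encard := encard_image_le _ _
    _ = 2 ^ B.card := by rw [encard_coe_eq_coe_finsetCard, Finset.card_powerset]; norm_cast

theorem triHalf_eq_sum_range (n : ℕ) : triHalf n = ∑ i ∈ Finset.range n, (i : ℝ) := by
  rw [triHalf, ← Finset.sum_range_id]
  push_cast
  rfl

theorem triHalf_succ (n : ℕ) : triHalf (n + 1) = triHalf n + n := by
  simp only [triHalf_eq_sum_range, Finset.sum_range_succ]

theorem triHalf_nonneg (n : ℕ) : 0 ≤ triHalf n := by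
  unfold triHalf
  positivity

theorem triHalf_mono : Monotone triHalf :=
  monotone_nat_of_le_succ fun n => by
    rw [triHalf_succ]
    exact le_add_of_nonneg_right n.cast_nonneg

theorem sub_one_le_triHalf_sub {a b : ℕ} (h : a < b) : (b : ℝ) - 1 ≤ triHalf b - triHalf a := by
  obtain ⟨c, rfl⟩ : ∃ c, b = c + 1 := ⟨b - 1, by omega⟩
  have := triHalf_mono (Nat.le_of_lt_succ h)
  rw [triHalf_succ]
  push_cast
  linarith

def collapseBelow (r n : ℕ) : ℕ := if n < r then 0 else n

theorem lt_of_abs_triHalf_sub_lt {r a b : ℕ} (hr : 2 ≤ r) (hab : a < b)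
    (h : |triHalf a - triHalf b| < r / 2) : b < r := by
  have hgap := sub_one_le_triHalf_sub hab
  rw [abs_sub_comm, abs_of_nonneg (by linarith [triHalf_mono hab.le])] at h
  have : (2 : ℝ) ≤ r := by exact_mod_cast hr
  exact_mod_cast (by linarith : (b : ℝ) < r)

theorem collapseBelow_eq_of_abs_triHalf_sub_lt {r a b : ℕ} (hr : 2 ≤ r)
    (h : |triHalf a - triHalf b| < r / 2) : collapseBelow r a = collapseBelow r b := by
  rcases lt_trichotomy a b with hab | rfl | hab
  · have hb := lt_of_abs_triHalf_sub_lt hr hab h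
    simp [collapseBelow, hb, hab.trans hb]
  · rfl
  · have ha := lt_of_abs_triHalf_sub_lt hr hab (by rwa [abs_sub_comm])
    simp [collapseBelow, ha, hab.trans ha]

theorem abs_triHalf_sub_le_of_collapseBelow_eq {r a b : ℕ}
    (h : collapseBelow r a = collapseBelow r b) : |triHalf a - triHalf b| ≤ triHalf r := by
  unfold collapseBelow at h
  split_ifs at h with ha hb hb
  · exact abs_sub_le_of_nonneg_of_le (triHalf_nonneg a) (triHalf_mono ha.le)
      (triHalf_nonneg b) (triHalf_mono hb.le)
  · omega
  · omega
  · simpa [h] using triHalf_nonneg r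

def periodicTile (T s : ℝ) (n : ℤ) : Set ℝ := closedBall (n * T) ((T + s) / 2)

section PeriodicTile

variable {T s : ℝ}

theorem mem_periodicTile_round (hT : 0 < T) {x y : ℝ} (h : |y - x| < s / 2) :
    y ∈ periodicTile T s (round (x / T)) := by
  have hround : |x - round (x / T) * T| ≤ T / 2 := by
    have := abs_sub_round (x / T)
    rw [← mul_le_mul_iff_of_pos_right hT, ← abs_of_pos hT, ← abs_mul, abs_of_pos hT] at this
    rwa [sub_mul, div_mul_cancel₀ x hT.ne', one_div_mul_eq_div] at this
  rw [periodicTile, mem_closedBall, Real.dist_eq]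
  linarith [abs_sub_le y x (round (x / T) * T)]

theorem abs_div_sub_lt_one_of_mem_periodicTile (hT : 0 < T) (hsT : s < T) {x : ℝ} {n : ℤ}
    (hx : x ∈ periodicTile T s n) : |x / T - n| < 1 := by
  rw [periodicTile, mem_closedBall, Real.dist_eq] at hx
  rw [← mul_lt_mul_iff_of_pos_right hT, ← abs_of_pos hT, ← abs_mul, abs_of_pos hT, sub_mul,
    div_mul_cancel₀ x hT.ne', one_mul]
  linarith

theorem setOf_mem_periodicTile_subset (hT : 0 < T) (hsT : s < T) (x : ℝ) :
    {n | x ∈ periodicTile T s n} ⊆ {⌊x / T⌋, ⌊x / T⌋ + 1} := by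
  intro n hn
  obtain ⟨hlo, hhi⟩ := abs_lt.mp (abs_div_sub_lt_one_of_mem_periodicTile hT hsT hn)
  have h1 : n - 1 ≤ ⌊x / T⌋ := Int.le_floor.mpr (by push_cast; linarith)
  have h2 : ⌊x / T⌋ < n + 1 := Int.floor_lt.mpr (by push_cast; linarith)
  simp only [Set.mem_insert_iff, Set.mem_singleton_iff]
  omega

theorem setOf_mem_periodicTile_subset_of_eq_mul (hT : 0 < T) (hsT : s < T) {x : ℝ} {m : ℤ}
    (hx : x = m * T) : {n | x ∈ periodicTile T s n} ⊆ {⌊x / T⌋} := by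
  intro n hn
  have hxT : x / T = m := by rw [hx, mul_div_cancel_right₀ _ hT.ne']
  have h := abs_div_sub_lt_one_of_mem_periodicTile hT hsT hn
  rw [hxT, ← Int.cast_sub, ← Int.cast_abs, ← Int.cast_one, Int.cast_lt, abs_lt] at h
  rw [hxT, Int.floor_intCast, Set.mem_singleton_iff]
  omega

end PeriodicTile

theorem isMultiple_zero (n : ℕ) : IsMultiple n 0 := ⟨0, by simp⟩

theorem IsMultiple.of_le {a b : ℕ} {x : ℝ} (hab : a ≤ b) (hx : IsMultiple b x) :
    IsMultiple a x := by
  obtain ⟨m, rfl⟩ := hx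
  refine ⟨m * 2 ^ (b - a), ?_⟩
  rw [Int.cast_mul, Int.cast_pow, Int.cast_ofNat, mul_assoc, ← pow_add, Nat.sub_add_cancel hab]

theorem ncard_setOf_not_isMultiple_le {k i r : ℕ} {f : Amb} (hf : f ∈ YSet k i) :
    {j | j < i ∧ ¬ IsMultiple r (f j)}.ncard ≤ r := by
  obtain ⟨-, hmul, hcard⟩ := hf
  rcases le_or_gt i r with hir | hri
  · calc _ ≤ (Iio i).ncard := ncard_le_ncard (fun j hj => hj.1) (finite_Iio i)
      _ ≤ r := by rwa [ncard_Iio_nat]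
  rcases le_or_gt r k with hrk | hkr
  · have hempty : {j | j < i ∧ ¬ IsMultiple r (f j)} = ∅ :=
      eq_empty_of_forall_notMem fun j hj => hj.2 ((hmul j hj.1).of_le hrk)
    simp [hempty]
  · calc _ ≤ {j | j < i ∧ ¬ IsMultiple i (f j)}.ncard :=
          ncard_le_ncard (fun j hj => ⟨hj.1, fun h => hj.2 (h.of_le hri.le)⟩)
            ((finite_Iio i).subset fun j hj => hj.1)
      _ ≤ r := hcard.trans hkr.le

theorem AsUnion.pt_mem_of_ite {Z : Type*} {S : ℕ → Set Z}
    (p : AsUnion fun i => if i = 0 then ∅ else S i) : (p.pt : Z) ∈ S p.idx := by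
  have h := p.pt.2
  split_ifs at h
  · exact absurd h (notMem_empty _)
  · exact h

namespace Y2Omega

def level (p : Y2Omega) : ℕ := p.idx

def dim (p : Y2Omega) : ℕ := (p.pt : AsR).idx

def vec (p : Y2Omega) : Amb := ((p.pt : AsR).pt : Amb)

theorem vec_mem_YSet (p : Y2Omega) : p.vec ∈ YSet p.level p.dim := AsUnion.pt_mem_of_ite p

theorem vec_eq_zero (p : Y2Omega) {j : ℕ} (hj : p.dim ≤ j) : p.vec j = 0 :=
  p.vec_mem_YSet.1 j hj

theorem dist_eq (p q : Y2Omega) :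
    dist p q = dist p.vec q.vec + |triHalf p.dim - triHalf q.dim|
      + |triHalf p.level - triHalf q.level| := rfl

def coverSet (r κ ι : ℕ) (w : ℕ → ℤ) : Set Y2Omega :=
  {p | collapseBelow r p.level = κ ∧ collapseBelow r p.dim = ι ∧
    ∀ j, p.vec j ∈ periodicTile (2 ^ r) r (w j)}

def cover (r : ℕ) : Set (Set Y2Omega) := {U | ∃ κ ι w, U = coverSet r κ ι w}

theorem ball_subset_coverSet {r : ℕ} (hr : 2 ≤ r) (p : Y2Omega) :
    ball p (r / 2) ⊆ coverSet r (collapseBelow r p.level) (collapseBelow r p.dim)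
      fun j => round (p.vec j / 2 ^ r) := by
  intro q hq
  rw [mem_ball, dist_eq] at hq
  have hvec := dist_nonneg (x := q.vec) (y := p.vec)
  have hdim := abs_nonneg (triHalf q.dim - triHalf p.dim)
  have hlevel := abs_nonneg (triHalf q.level - triHalf p.level)
  refine ⟨collapseBelow_eq_of_abs_triHalf_sub_lt hr (by linarith),
    collapseBelow_eq_of_abs_triHalf_sub_lt hr (by linarith), fun j => ?_⟩
  have hj := BoundedContinuousFunction.dist_coe_le_dist (f := q.vec) (g := p.vec) j
  rw [Real.dist_eq] at hj
  exact mem_periodicTile_round (by positivity) (by linarith)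

theorem uniformlyBdd_cover (r : ℕ) : UniformlyBdd (cover r) := by
  refine ⟨2 ^ r + r + 2 * triHalf r, ?_⟩
  rintro U ⟨κ, ι, w, rfl⟩ p ⟨hpκ, hpι, hpw⟩ q ⟨hqκ, hqι, hqw⟩
  have hvec : dist p.vec q.vec ≤ 2 ^ r + r := by
    refine (BoundedContinuousFunction.dist_le (by positivity)).mpr fun j => ?_
    have h := dist_triangle_right (p.vec j) (q.vec j) ((w j : ℝ) * 2 ^ r)
    linarith [mem_closedBall.mp (hpw j), mem_closedBall.mp (hqw j)]
  rw [dist_eq]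
  linarith [abs_triHalf_sub_le_of_collapseBelow_eq (hpι.trans hqι.symm),
    abs_triHalf_sub_le_of_collapseBelow_eq (hpκ.trans hqκ.symm)]

theorem encard_setOf_mem_cover_le (r : ℕ) (p : Y2Omega) :
    {U ∈ cover r | p ∈ U}.encard ≤ 2 ^ r := by
  classical
  have hT : (0 : ℝ) < 2 ^ r := by positivity
  have hrT : (r : ℝ) < 2 ^ r := by exact_mod_cast r.lt_two_pow_self
  set S : ℕ → Set ℤ := fun j => {n | p.vec j ∈ periodicTile (2 ^ r) r n}
  set B := (Finset.range p.dim).filter fun j => ¬ IsMultiple r (p.vec j)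
  have hsub : {U ∈ cover r | p ∈ U} ⊆
      (coverSet r (collapseBelow r p.level) (collapseBelow r p.dim)) '' univ.pi S := by
    rintro _ ⟨⟨κ, ι, w, rfl⟩, hκ, hι, hw⟩
    exact ⟨w, fun j _ => hw j, by rw [hκ, hι]⟩
  have hpi : (univ.pi S).encard ≤ 2 ^ B.card := by
    refine encard_univ_pi_le_two_pow B _ _ S
      (fun j => setOf_mem_periodicTile_subset hT hrT (p.vec j)) fun j hj => ?_
    have hmul : IsMultiple r (p.vec j) := by
      by_cases hjd : j < p.dim
      · simpa [B, hjd] using hj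
      · rw [p.vec_eq_zero (not_lt.mp hjd)]
        exact isMultiple_zero r
    obtain ⟨m, hm⟩ := hmul
    exact setOf_mem_periodicTile_subset_of_eq_mul hT hrT hm
  have hB : B.card ≤ r := by
    rw [← ncard_coe_finset]
    convert ncard_setOf_not_isMultiple_le (r := r) p.vec_mem_YSet using 2
    ext j
    simp [B]
  calc _ ≤ _ := encard_le_encard hsub
    _ ≤ (univ.pi S).encard := encard_image_le _ _
    _ ≤ 2 ^ B.card := hpi
    _ ≤ 2 ^ r := by exact_mod_cast Nat.pow_le_pow_right two_pos hB

end Y2Omega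

theorem two_pow_le_three_pow_pred_mul {r : ℕ} (hr : 2 ≤ r) : 2 ^ r ≤ 3 ^ (r - 1) * r := by
  obtain ⟨n, rfl⟩ : ∃ n, r = n + 1 := ⟨r - 1, by omega⟩
  rw [pow_succ, Nat.add_sub_cancel]
  exact Nat.mul_le_mul (Nat.pow_le_pow_left (by norm_num) n) (by omega)

end AsympPaper

/-- For every integer `r > 4`,
`ad_{Y_{2ω}}(r/2) ≤ r(r+3)/2 + 3^(r-1)·r + 1`. -/
theorem statement_12 (r : ℕ) (hr : 4 < r) :
    adim Y2Omega ((r : ℝ) / 2) ≤ ((r * (r + 3) / 2 + 3 ^ (r - 1) * r + 1 : ℕ) : ℕ∞) := by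
  have hr2 : 2 ≤ r := by omega
  have hlam : (0 : ℝ) < r / 2 := by positivity
  have hball : ∀ p : Y2Omega, ∃ U ∈ Y2Omega.cover r, ball p (r / 2) ⊆ U := fun p =>
    ⟨_, ⟨_, _, _, rfl⟩, Y2Omega.ball_subset_coverSet hr2 p⟩
  calc adim Y2Omega ((r : ℝ) / 2) ≤ ((2 ^ r : ℕ) : ℕ∞) - 1 :=
        adim_le_of_cover (Y2Omega.uniformlyBdd_cover r) (covers_of_forall_ball_subset hlam hball)
          (ofReal_le_lebesgueNum hlam hball)
          (covMult_le_of_encard_le fun p => by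
            exact_mod_cast Y2Omega.encard_setOf_mem_cover_le r p)
    _ ≤ _ := by
      rw [tsub_le_iff_right]
      exact_mod_cast (two_pow_le_three_pow_pred_mul hr2).trans (by omega)
end
end
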